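/- Let 0 < b < b̄, O = {(R,Z) ∈ ℝ² : R > 0, bR < Z < b̄R} and O̅ = {(R,Z) : R ≥ 0, bR ≤ Z ≤ b̄R}. Suppose P is continuous on O̅ with P(0,0) = 0 and continuously differentiable on O. Define H(R,Z) = R ∫₁^R P(s, sZ/R) s⁻² ds for R > 0 and H(0,0) = 0. Then H is continuous on O̅ (in particular H(R,Z) → 0 as (R,Z) → (0,0) within O̅) and continuously differentiable on O. -/

import Mathlib

/-!
Write `Z = R k`. Then `H(R, Z) = R F(R, Z / R)` with `F(x, k) = ∫₁ˣ P(t, t k) t⁻² dt`, and the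
substitution turns the cone into the strip `(0, ∞) × [b, b̄]`, on which the integrand of `F` is as
regular as `P`. So away from the vertex `H` is continuous, and on `O` it is `C¹` because both
partial derivatives of `F` (the integrand, and the integral of its `k`-derivative) are continuous.
At the vertex, if `|P| ≤ ε` on `O̅` near `0` (that is, for `t < d`) and `|P| ≤ M` for `t ≤ 1`, then
`|P(t, t k)| t⁻² ≤ ε t⁻² + M d⁻²`, whence `|H(R, Z)| ≤ ε + R M d⁻²`.
-/

open Set MeasureTheory intervalIntegral Topology

section ParametricPrimitive

variable {E : Type*} [NormedAddCommGroup E] [NormedSpace ℝ E]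

theorem continuousOn_parametric_primitive_of_continuousOn {X : Type*} [TopologicalSpace X]
    {g : ℝ × X → E} {I : Set ℝ} [I.OrdConnected] {K : Set X} {a : ℝ} (ha : a ∈ I)
    (hg : ContinuousOn g (I ×ˢ K)) :
    ContinuousOn (fun p : ℝ × X => ∫ t in a..p.1, g (t, p.2)) (I ×ˢ K) := by
  -- Clamping `t` to `[[a, p.1]]` extends the integrand continuously to all `t` without changing
  -- the integrals.
  let clamp : I ×ˢ K → ℝ → ℝ := fun p t =>
    a ⊓ (p : ℝ × X).1 ⊔ t ⊓ (a ⊔ (p : ℝ × X).1)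
  have clamp_mem : ∀ (p : I ×ˢ K) t, clamp p t ∈ uIcc a (p : ℝ × X).1 := fun p t =>
    ⟨le_sup_left, sup_le inf_le_sup inf_le_right⟩
  have hclamp : Continuous (Function.uncurry fun p t => g (clamp p t, (p : ℝ × X).2)) := by
    refine hg.comp_continuous (by fun_prop) fun q => ⟨?_, q.1.2.2⟩
    exact ‹I.OrdConnected›.uIcc_subset ha q.1.2.1 (clamp_mem _ _)
  rw [continuousOn_iff_continuous_domRestrict]
  refine (continuous_parametric_intervalIntegral_of_continuous (μ := volume) hclamp
    (continuous_fst.comp continuous_subtype_val)).congr fun p => integral_congr fun t ht => ?_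
  simp only [Function.comp_apply, uIcc, mem_Icc] at ht
  simp only [clamp, inf_eq_left.2 ht.2, sup_eq_right.2 ht.1]

theorem hasDerivAt_intervalIntegral_of_hasDerivAt_snd {g g₂ : ℝ × ℝ → E} {J : Set ℝ}
    {a x k₀ : ℝ} (hJ : IsOpen J) (hk₀ : k₀ ∈ J) (hg : ContinuousOn g (uIcc a x ×ˢ J))
    (hg₂ : ContinuousOn g₂ (uIcc a x ×ˢ J))
    (hderiv : ∀ q ∈ uIcc a x ×ˢ J, HasDerivAt (fun k => g (q.1, k)) (g₂ q) q.2) :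
    HasDerivAt (fun k => ∫ t in a..x, g (t, k)) (∫ t in a..x, g₂ (t, k₀)) k₀ := by
  obtain ⟨r, hr, hrJ⟩ := Metric.nhds_basis_closedBall.mem_iff.1 (hJ.mem_nhds hk₀)
  have hball : Metric.ball k₀ r ⊆ J := Metric.ball_subset_closedBall.trans hrJ
  obtain ⟨M, hM⟩ := (isCompact_uIcc.prod (isCompact_closedBall k₀ r)).exists_bound_of_continuousOn
    (hg₂.mono (prod_mono subset_rfl hrJ))
  have slice {h : ℝ × ℝ → E} (hh : ContinuousOn h (uIcc a x ×ˢ J)) {k : ℝ} (hk : k ∈ J) :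
      ContinuousOn (fun t => h (t, k)) (uIcc a x) :=
    hh.comp (by fun_prop) fun t ht => ⟨ht, hk⟩
  refine (hasDerivAt_integral_of_dominated_loc_of_deriv_le (bound := fun _ => M)
    (Metric.ball_mem_nhds k₀ hr) ?_ (slice hg hk₀).intervalIntegrable
    ((slice hg₂ hk₀).mono uIoc_subset_uIcc |>.aestronglyMeasurable measurableSet_uIoc)
    (ae_of_all _ fun t ht k hk => hM (t, k) ⟨uIoc_subset_uIcc ht, Metric.ball_subset_closedBall hk⟩)
    intervalIntegrable_const
    (ae_of_all _ fun t ht k hk => hderiv (t, k) ⟨uIoc_subset_uIcc ht, hball hk⟩)).2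
  filter_upwards [Metric.ball_mem_nhds k₀ hr] with k hk
  exact (slice hg (hball hk)).mono uIoc_subset_uIcc |>.aestronglyMeasurable measurableSet_uIoc

theorem ContinuousOn.clm_coprod {X : Type*} [TopologicalSpace X] {A B : X → ℝ →L[ℝ] E}
    {s : Set X} (hA : ContinuousOn A s) (hB : ContinuousOn B s) :
    ContinuousOn (fun x => (A x).coprod (B x)) s :=
  (ContinuousLinearMap.coprodEquivL ℝ).continuous.comp_continuousOn (hA.prodMk hB)

theorem hasDerivAt_primitive_of_continuousOn [CompleteSpace E] {f : ℝ → E} {I : Set ℝ}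
    [I.OrdConnected] {a x : ℝ} (hI : IsOpen I) (ha : a ∈ I) (hx : x ∈ I)
    (hf : ContinuousOn f I) : HasDerivAt (fun u => ∫ t in a..u, f t) (f x) x :=
  integral_hasDerivAt_right (hf.mono (‹I.OrdConnected›.uIcc_subset ha hx)).intervalIntegrable
    (hf.stronglyMeasurableAtFilter hI x hx) (hf.continuousAt (hI.mem_nhds hx))

theorem contDiffOn_parametric_primitive [CompleteSpace E] {g : ℝ × ℝ → E} {I J : Set ℝ}
    [I.OrdConnected] {a : ℝ} (hI : IsOpen I) (hJ : IsOpen J) (ha : a ∈ I)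
    (hg : ContDiffOn ℝ 1 g (I ×ˢ J)) :
    ContDiffOn ℝ 1 (fun p : ℝ × ℝ => ∫ t in a..p.1, g (t, p.2)) (I ×ˢ J) := by
  have hU : IsOpen (I ×ˢ J) := hI.prod hJ
  set g₂ : ℝ × ℝ → E := fun q => fderiv ℝ g q (0, 1)
  have hg₂ : ContinuousOn g₂ (I ×ˢ J) :=
    (hg.continuousOn_fderiv_of_isOpen hU le_rfl).clm_apply continuousOn_const
  have hderiv₂ (q : ℝ × ℝ) (hq : q ∈ I ×ˢ J) :
      HasDerivAt (fun k => g (q.1, k)) (g₂ q) q.2 :=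
    ((hg.differentiableOn one_ne_zero).differentiableAt (hU.mem_nhds hq)).hasFDerivAt
      |>.comp_hasDerivAt q.2 ((hasDerivAt_const _ _).prodMk (hasDerivAt_id _))
  have hsub (x : ℝ) (hx : x ∈ I) : uIcc a x ×ˢ J ⊆ I ×ˢ J :=
    prod_mono (‹I.OrdConnected›.uIcc_subset ha hx) subset_rfl
  have hpartial₁ (q : ℝ × ℝ) (hq : q ∈ I ×ˢ J) :
      HasDerivAt (fun x => ∫ t in a..x, g (t, q.2)) (g q) q.1 :=
    hasDerivAt_primitive_of_continuousOn hI ha hq.1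
      (hg.continuousOn.comp (by fun_prop) fun t ht => ⟨ht, hq.2⟩)
  have hpartial₂ (q : ℝ × ℝ) (hq : q ∈ I ×ˢ J) :
      HasDerivAt (fun k => ∫ t in a..q.1, g (t, k)) (∫ t in a..q.1, g₂ (t, q.2)) q.2 :=
    hasDerivAt_intervalIntegral_of_hasDerivAt_snd hJ hq.2 (hg.continuousOn.mono (hsub _ hq.1))
      (hg₂.mono (hsub _ hq.1)) fun q' hq' => hderiv₂ q' (hsub _ hq.1 hq')
  set f₁ : ℝ → ℝ → ℝ →L[ℝ] E := fun x k => (1 : ℝ →L[ℝ] ℝ).smulRight (g (x, k))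
  set f₂ : ℝ → ℝ → ℝ →L[ℝ] E := fun x k => (1 : ℝ →L[ℝ] ℝ).smulRight (∫ t in a..x, g₂ (t, k))
  have hf₁ : ContinuousOn ↿f₁ (I ×ˢ J) :=
    (ContinuousLinearMap.smulRightL ℝ ℝ E 1).continuous.comp_continuousOn hg.continuousOn
  have hf₂ : ContinuousOn ↿f₂ (I ×ˢ J) :=
    (ContinuousLinearMap.smulRightL ℝ ℝ E 1).continuous.comp_continuousOn
      (continuousOn_parametric_primitive_of_continuousOn ha hg₂)
  have hfderiv (q : ℝ × ℝ) (hq : q ∈ I ×ˢ J) :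
      HasFDerivAt (fun p : ℝ × ℝ => ∫ t in a..p.1, g (t, p.2)) ((↿f₁ q).coprod (↿f₂ q)) q := by
    have hq' : I ×ˢ J ∈ 𝓝 q := hU.mem_nhds hq
    refine (hasStrictFDerivAt_uncurry_coprod (f := fun x k => ∫ t in a..x, g (t, k)) ?_ ?_
      (hf₁.continuousAt hq') (hf₂.continuousAt hq')).hasFDerivAt
    · filter_upwards [hq'] with q' hq'
      exact (hpartial₁ q' hq').hasFDerivAt
    · filter_upwards [hq'] with q' hq'
      exact (hpartial₂ q' hq').hasFDerivAt
  exact fun q hq => (contDiffAt_one_iff.2 ⟨_, _, hU.mem_nhds hq, hf₁.clm_coprod hf₂,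
    hfderiv⟩).contDiffWithinAt

end ParametricPrimitive

theorem abs_mul_intervalIntegral_div_sq_le {f : ℝ → ℝ} {r d ε M : ℝ} (hr : 0 < r) (hr1 : r ≤ 1)
    (hd : 0 < d) (hε : 0 ≤ ε) (hsmall : ∀ t ∈ Icc r 1, t < d → |f t| ≤ ε)
    (hM : ∀ t ∈ Icc r 1, |f t| ≤ M) :
    |r * ∫ t in (1:ℝ)..r, f t / t ^ 2| ≤ ε + r * M / d ^ 2 := by
  have hM0 : 0 ≤ M := (abs_nonneg _).trans (hM 1 ⟨hr1, le_rfl⟩)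
  have hbound : ∀ t ∈ Ioc r 1, ‖f t / t ^ 2‖ ≤ ε / t ^ 2 + M / d ^ 2 := by
    intro t ht
    have ht0 : 0 < t := hr.trans ht.1
    rw [Real.norm_eq_abs, abs_div, abs_of_pos (by positivity : 0 < t ^ 2)]
    rcases lt_or_ge t d with htd | hdt
    · calc |f t| / t ^ 2 ≤ ε / t ^ 2 := by gcongr; exact hsmall t (Ioc_subset_Icc_self ht) htd
          _ ≤ ε / t ^ 2 + M / d ^ 2 := le_add_of_nonneg_right (by positivity)
    · calc |f t| / t ^ 2 ≤ M / d ^ 2 := by gcongr; exact hM t (Ioc_subset_Icc_self ht)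
          _ ≤ ε / t ^ 2 + M / d ^ 2 := le_add_of_nonneg_left (by positivity)
  have hpos : ∀ t ∈ uIcc r 1, t ≠ 0 := fun t ht => ((lt_min hr one_pos).trans_le ht.1).ne'
  have hprim : ∀ t ∈ uIcc r 1,
      HasDerivAt (fun t => -ε * t⁻¹ + M / d ^ 2 * t) (ε / t ^ 2 + M / d ^ 2) t := by
    intro t ht
    refine (((hasDerivAt_inv (hpos t ht)).const_mul (-ε)).add
      ((hasDerivAt_id t).const_mul (M / d ^ 2))).congr_deriv ?_
    ring
  have hint : IntervalIntegrable (fun t => ε / t ^ 2 + M / d ^ 2) volume r 1 :=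
    ((continuousOn_const.div (continuousOn_pow 2) fun t ht => pow_ne_zero 2 (hpos t ht)).add
      continuousOn_const).intervalIntegrable
  have hval : ∫ t in r..1, (ε / t ^ 2 + M / d ^ 2) = ε * (r⁻¹ - 1) + M / d ^ 2 * (1 - r) := by
    rw [integral_eq_sub_of_hasDerivAt hprim hint]
    ring
  calc |r * ∫ t in (1:ℝ)..r, f t / t ^ 2| = r * ‖∫ t in r..1, f t / t ^ 2‖ := by
        rw [integral_symm, abs_mul, abs_neg, abs_of_pos hr, Real.norm_eq_abs]
    _ ≤ r * ∫ t in r..1, (ε / t ^ 2 + M / d ^ 2) := by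
        gcongr
        exact norm_integral_le_of_norm_le hr1 (ae_of_all _ hbound) hint
    _ = ε * (1 - r) + r * M / d ^ 2 * (1 - r) := by
        rw [hval]
        field_simp
    _ ≤ ε + r * M / d ^ 2 := by
        have : 0 ≤ r * M / d ^ 2 := by positivity
        nlinarith

def closedCone (b bbar : ℝ) : Set (ℝ × ℝ) := {p | 0 ≤ p.1 ∧ b * p.1 ≤ p.2 ∧ p.2 ≤ bbar * p.1}

def openCone (b bbar : ℝ) : Set (ℝ × ℝ) := {p | 0 < p.1 ∧ b * p.1 < p.2 ∧ p.2 < bbar * p.1}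

noncomputable def coneIntegrand (P : ℝ × ℝ → ℝ) (q : ℝ × ℝ) : ℝ := P (q.1, q.1 * q.2) / q.1 ^ 2

/-- At `p.1 = 0` the factor `p.1` makes this `0`, whatever the (junk) integral is. -/
noncomputable def pressurePotential (P : ℝ × ℝ → ℝ) (p : ℝ × ℝ) : ℝ :=
  p.1 * ∫ t in (1:ℝ)..p.1, coneIntegrand P (t, p.2 / p.1)

section Cone

variable {b bbar : ℝ} {P : ℝ × ℝ → ℝ}

theorem zero_mem_closedCone : (0 : ℝ × ℝ) ∈ closedCone b bbar :=
  ⟨le_rfl, by simp, by simp⟩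

theorem mk_mul_mem_closedCone {t k : ℝ} (ht : 0 ≤ t) (hk : k ∈ Icc b bbar) :
    (t, t * k) ∈ closedCone b bbar :=
  ⟨ht, by nlinarith [hk.1], by nlinarith [hk.2]⟩

theorem mk_mul_mem_openCone {t k : ℝ} (ht : 0 < t) (hk : k ∈ Ioo b bbar) :
    (t, t * k) ∈ openCone b bbar :=
  ⟨ht, by nlinarith [hk.1], by nlinarith [hk.2]⟩

theorem div_mem_Icc_of_mem_closedCone {p : ℝ × ℝ} (hp : p ∈ closedCone b bbar) (hpos : 0 < p.1) :
    p.2 / p.1 ∈ Icc b bbar :=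
  ⟨(le_div_iff₀ hpos).2 hp.2.1, (div_le_iff₀ hpos).2 hp.2.2⟩

theorem div_mem_Ioo_of_mem_openCone {p : ℝ × ℝ} (hp : p ∈ openCone b bbar) :
    p.2 / p.1 ∈ Ioo b bbar :=
  ⟨(lt_div_iff₀ hp.1).2 hp.2.1, (div_lt_iff₀ hp.1).2 hp.2.2⟩

theorem eq_zero_of_mem_closedCone {p : ℝ × ℝ} (hp : p ∈ closedCone b bbar) (h : p.1 = 0) :
    p = 0 :=
  Prod.ext h (le_antisymm (by simpa [h] using hp.2.2) (by simpa [h] using hp.2.1))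

theorem norm_mk_mul_le {t k : ℝ} (ht : 0 ≤ t) (hk : k ∈ Icc b bbar) :
    ‖(t, t * k)‖ ≤ t * (1 + |b| + |bbar|) := by
  have hk' : |k| ≤ |b| + |bbar| :=
    (abs_le_max_abs_abs hk.1 hk.2).trans (max_le_add_of_nonneg (abs_nonneg _) (abs_nonneg _))
  rw [Prod.norm_def, Real.norm_eq_abs, Real.norm_eq_abs, abs_mul, abs_of_nonneg ht]
  exact max_le (by nlinarith [abs_nonneg b, abs_nonneg bbar]) (by nlinarith [abs_nonneg b])

theorem continuousOn_coneIntegrand (hP : ContinuousOn P (closedCone b bbar)) :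
    ContinuousOn (coneIntegrand P) (Ioi 0 ×ˢ Icc b bbar) :=
  (hP.comp (by fun_prop) fun q hq => mk_mul_mem_closedCone (le_of_lt hq.1) hq.2).div
    (by fun_prop) fun q hq => pow_ne_zero 2 (ne_of_gt hq.1)

theorem contDiffOn_coneIntegrand (hP : ContDiffOn ℝ 1 P (openCone b bbar)) :
    ContDiffOn ℝ 1 (coneIntegrand P) (Ioi 0 ×ˢ Ioo b bbar) :=
  (hP.comp (by fun_prop) fun q hq => mk_mul_mem_openCone hq.1 hq.2).div
    (by fun_prop) fun q hq => pow_ne_zero 2 (ne_of_gt hq.1)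

theorem exists_pos_abs_le_of_continuousWithinAt_zero
    (hP : ContinuousWithinAt P (closedCone b bbar) 0) (hP0 : P 0 = 0) {ε : ℝ} (hε : 0 < ε) :
    ∃ d > 0, ∀ t ≥ 0, t < d → ∀ k ∈ Icc b bbar, |P (t, t * k)| ≤ ε := by
  obtain ⟨δ, hδ, hPδ⟩ := Metric.continuousWithinAt_iff.1 hP ε hε
  have hC : 0 < 1 + |b| + |bbar| := by positivity
  refine ⟨δ / (1 + |b| + |bbar|), by positivity, fun t ht htd k hk => ?_⟩
  have hnorm : ‖(t, t * k)‖ < δ :=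
    calc ‖(t, t * k)‖ ≤ t * (1 + |b| + |bbar|) := norm_mk_mul_le ht hk
      _ < δ := (lt_div_iff₀ hC).1 htd
  have := hPδ (mk_mul_mem_closedCone ht hk) (by simpa using hnorm)
  rw [hP0, dist_zero_right, Real.norm_eq_abs] at this
  exact this.le

theorem continuousWithinAt_pressurePotential_zero (hP : ContinuousOn P (closedCone b bbar))
    (hP0 : P 0 = 0) : ContinuousWithinAt (pressurePotential P) (closedCone b bbar) 0 := by
  obtain ⟨M, hM⟩ : ∃ M, ∀ q ∈ Icc 0 1 ×ˢ Icc b bbar, ‖P (q.1, q.1 * q.2)‖ ≤ M :=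
    (isCompact_Icc.prod isCompact_Icc).exists_bound_of_continuousOn
      (hP.comp (by fun_prop) fun q hq => mk_mul_mem_closedCone hq.1.1 hq.2)
  rw [Metric.continuousWithinAt_iff]
  intro ε hε
  obtain ⟨d, hd, hsmall⟩ :=
    exists_pos_abs_le_of_continuousWithinAt_zero (hP 0 zero_mem_closedCone) hP0 (half_pos hε)
  refine ⟨min 1 (ε * d ^ 2 / (2 * (|M| + 1))), by positivity, fun p hp hpdist => ?_⟩
  have hp0 : pressurePotential P 0 = 0 := by simp [pressurePotential]
  rw [hp0, dist_zero_right, Real.norm_eq_abs]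
  rcases hp.1.eq_or_lt with h | hpos
  · simp [pressurePotential, ← h, hε]
  set r := p.1
  have hk : p.2 / p.1 ∈ Icc b bbar := div_mem_Icc_of_mem_closedCone hp hpos
  have hr : r < min 1 (ε * d ^ 2 / (2 * (|M| + 1))) :=
    (le_abs_self r).trans_lt ((norm_fst_le p).trans_lt (by simpa using hpdist))
  calc |pressurePotential P p| ≤ ε / 2 + r * M / d ^ 2 :=
        abs_mul_intervalIntegral_div_sq_le hpos ((hr.trans_le (min_le_left _ _)).le) hd
          (half_pos hε).le (fun t ht htd => hsmall t (hpos.le.trans ht.1) htd _ hk)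
          fun t ht => hM (t, _) ⟨⟨hpos.le.trans ht.1, ht.2⟩, hk⟩
    _ < ε := by
        have hr' : r * (2 * (|M| + 1)) < ε * d ^ 2 :=
          (lt_div_iff₀ (by positivity)).1 (hr.trans_le (min_le_right _ _))
        have : r * M / d ^ 2 < ε / 2 := by
          rw [div_lt_iff₀ (by positivity)]
          nlinarith [le_abs_self M]
        linarith

theorem continuousOn_pressurePotential (hP : ContinuousOn P (closedCone b bbar)) (hP0 : P 0 = 0) :
    ContinuousOn (pressurePotential P) (closedCone b bbar) := by
  intro p hp
  rcases hp.1.eq_or_lt with h | hpos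
  · rw [eq_zero_of_mem_closedCone hp h.symm]
    exact continuousWithinAt_pressurePotential_zero hP hP0
  have hF : ContinuousOn (fun q : ℝ × ℝ => ∫ t in (1:ℝ)..q.1, coneIntegrand P (t, q.2))
      (Ioi 0 ×ˢ Icc b bbar) :=
    continuousOn_parametric_primitive_of_continuousOn (mem_Ioi.2 one_pos)
      (continuousOn_coneIntegrand hP)
  have hS : ContinuousOn (pressurePotential P) (closedCone b bbar ∩ {q | 0 < q.1}) :=
    continuousOn_fst.mul (hF.comp (continuousOn_fst.prodMk
      (continuousOn_snd.div continuousOn_fst fun q hq => hq.2.ne'))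
      fun q hq => ⟨hq.2, div_mem_Icc_of_mem_closedCone hq.1 hq.2⟩)
  exact (continuousWithinAt_inter ((isOpen_lt continuous_const continuous_fst).mem_nhds hpos)).1
    (hS p ⟨hp, hpos⟩)

theorem contDiffOn_pressurePotential (hP : ContDiffOn ℝ 1 P (openCone b bbar)) :
    ContDiffOn ℝ 1 (pressurePotential P) (openCone b bbar) :=
  contDiffOn_fst.mul ((contDiffOn_parametric_primitive isOpen_Ioi isOpen_Ioo (mem_Ioi.2 one_pos)
    (contDiffOn_coneIntegrand hP)).comp (contDiffOn_fst.prodMk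
      (contDiffOn_snd.div contDiffOn_fst fun _ hp => hp.1.ne'))
    fun _ hp => ⟨hp.1, div_mem_Ioo_of_mem_openCone hp⟩)

end Cone

theorem stmt_6_general
    (b bbar : ℝ)
    (O Obar : Set (ℝ × ℝ))
    (hO : O = {p : ℝ × ℝ | 0 < p.1 ∧ b * p.1 < p.2 ∧ p.2 < bbar * p.1})
    (hObar : Obar = {p : ℝ × ℝ | 0 ≤ p.1 ∧ b * p.1 ≤ p.2 ∧ p.2 ≤ bbar * p.1})
    (P : ℝ × ℝ → ℝ)
    (hPcont : ContinuousOn P Obar) (hP0 : P (0, 0) = 0)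
    (hPC1 : ContDiffOn ℝ 1 P O)
    (H : ℝ × ℝ → ℝ)
    (hHdef : ∀ p : ℝ × ℝ, 0 < p.1 →
      H p = p.1 * ∫ s in (1:ℝ)..p.1, P (s, s * p.2 / p.1) / s ^ 2)
    (hH0 : H (0, 0) = 0) :
    ContinuousOn H Obar ∧ ContDiffOn ℝ 1 H O := by
  subst hO hObar
  have hH : EqOn H (pressurePotential P) (closedCone b bbar) := by
    intro p hp
    rcases hp.1.eq_or_lt with h | hpos
    · rw [eq_zero_of_mem_closedCone hp h.symm]
      exact hH0.trans (zero_mul _).symm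
    · simp only [hHdef p hpos, pressurePotential, coneIntegrand, mul_div_assoc]
  exact ⟨(continuousOn_pressurePotential hPcont hP0).congr hH,
    (contDiffOn_pressurePotential hPC1).congr fun p hp => hH ⟨hp.1.le, hp.2.1.le, hp.2.2.le⟩⟩

/-- For `0 < b < b̄`, with `O` the open cone and `O̅` its
closure, if `P` is continuous on `O̅` with `P(0,0) = 0` and `C¹` on `O`, then
the pressure potential `H` (given by `H(R,Z) = R ∫₁^R P(s,sZ/R)/s² ds` for
`R > 0` and `H(0,0) = 0`) is continuous on `O̅` and `C¹` on `O`. -/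
theorem stmt_6
    (b bbar : ℝ) (hb : 0 < b) (hbbar : b < bbar)
    (O Obar : Set (ℝ × ℝ))
    (hO : O = {p : ℝ × ℝ | 0 < p.1 ∧ b * p.1 < p.2 ∧ p.2 < bbar * p.1})
    (hObar : Obar = {p : ℝ × ℝ | 0 ≤ p.1 ∧ b * p.1 ≤ p.2 ∧ p.2 ≤ bbar * p.1})
    (P : ℝ × ℝ → ℝ)
    (hPcont : ContinuousOn P Obar) (hP0 : P (0, 0) = 0)
    (hPC1 : ContDiffOn ℝ 1 P O)
    (H : ℝ × ℝ → ℝ)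
    (hHdef : ∀ p : ℝ × ℝ, 0 < p.1 →
      H p = p.1 * ∫ s in (1:ℝ)..p.1, P (s, s * p.2 / p.1) / s ^ 2)
    (hH0 : H (0, 0) = 0) :
    ContinuousOn H Obar ∧ ContDiffOn ℝ 1 H O :=
  stmt_6_general b bbar O Obar hO hObar P hPcont hP0 hPC1 H hHdef hH0
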